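/- Let v ∈ (0,1) be fixed and for each m let f_m(z) = [Γ(m)/(Γ(mv)Γ(m(1−v)))] · m^{−1/2} · (z/√m + v)^{mv−1}(1 − z/√m − v)^{m(1−v)−1} for z with 0 < z/√m + v < 1. Then for every fixed z ∈ ℝ, f_m(z) → (1/√(2π v(1−v))) exp(−z²/(2v(1−v))) as m → ∞. -/

import Mathlib

/-!
Stirling's formula `log Γ(x) = (x - 1/2) log x - x + log (2π) / 2 + o(1)` holds for real `x → ∞`:
Mathlib has it along the integers, and log-convexity of `Γ` squeezes `log Γ` between chords on
consecutive unit intervals. Applied to `Γ(m)`, `Γ(m v)` and `Γ(m (1 - v))`, it reduces `f_m(z)` to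
`(2π v (1 - v))^(-1/2) (1 + z / (√m v))^(m v - 1) (1 - z / (√m (1 - v)))^(m (1 - v) - 1)`.
Expanding `log (1 + h) = h - h² / 2 + O(h³)`, the terms `± √m z` cancel and the quadratic ones add
up to `-z² / (2 v (1 - v))`.
-/

open Filter Real Topology Asymptotics
open scoped Nat

noncomputable def stirlingRemainder (x : ℝ) : ℝ :=
  log (Gamma x) - ((x - 1 / 2) * log x - x + log (2 * π) / 2)

lemma stirlingRemainder_natCast {n : ℕ} (hn : n ≠ 0) :
    stirlingRemainder n = log (Stirling.stirlingSeq n) - log √π := by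
  have hn0 : (0 : ℝ) < n := by positivity
  have hΓ : log n ! = log n + log (Gamma n) := by
    rw [← Gamma_nat_eq_factorial, Gamma_add_one hn0.ne',
      log_mul hn0.ne' (Gamma_pos_of_pos hn0).ne']
  rw [stirlingRemainder, Stirling.log_stirlingSeq_formula, hΓ, log_sqrt pi_pos.le,
    log_mul two_ne_zero hn0.ne', log_mul two_ne_zero pi_ne_zero,
    log_div hn0.ne' (exp_pos 1).ne', log_exp]
  ring

lemma tendsto_stirlingRemainder_natCast :
    Tendsto (fun n : ℕ => stirlingRemainder n) atTop (𝓝 0) := by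
  have h := ((continuousAt_log (by positivity)).tendsto.comp
    Stirling.tendsto_stirlingSeq_sqrt_pi).sub_const (log √π)
  rw [sub_self] at h
  refine h.congr' ?_
  filter_upwards [eventually_ne_atTop 0] with n hn
  exact (stirlingRemainder_natCast hn).symm

lemma log_Gamma_add_one {y : ℝ} (hy : 0 < y) :
    (log ∘ Gamma) (y + 1) = (log ∘ Gamma) y + log y := by
  rw [Function.comp_apply, Gamma_add_one hy.ne', log_mul hy.ne' (Gamma_pos_of_pos hy).ne',
    add_comm, Function.comp_apply]

-- `log Γ` lies between its chords through `n - 1, n` and `n, n + 1` (log-convexity).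
lemma abs_log_Gamma_nat_add_sub_le {n : ℕ} (hn : 2 ≤ n) {t : ℝ} (ht0 : 0 ≤ t) (ht1 : t ≤ 1) :
    |log (Gamma (n + t)) - log (Gamma n) - t * log n| ≤ log n - log (n - 1) := by
  have hn1 : (1 : ℝ) < n := by exact_mod_cast hn
  have hlog : log (n - 1) ≤ log n := log_le_log (by linarith) (by linarith)
  rcases ht0.eq_or_lt with rfl | ht0
  · simpa using hlog
  have upper := BohrMollerup.f_add_nat_le (n := n) convexOn_log_Gamma log_Gamma_add_one
    (by omega) ht0 ht1
  have lower := BohrMollerup.f_add_nat_ge convexOn_log_Gamma log_Gamma_add_one hn ht0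
  simp only [Function.comp_apply] at upper lower
  rw [abs_le]
  constructor <;> nlinarith

lemma abs_stirling_add_sub_le {y t : ℝ} (hy : 1 / 2 ≤ y) (ht0 : 0 ≤ t) (ht1 : t ≤ 1) :
    |(y + t - 1 / 2) * log (y + t) - (y - 1 / 2) * log y - t - t * log y| ≤ 1 / (2 * y) := by
  have hy0 : 0 < y := by linarith
  have hyt : 0 < y + t := by linarith
  set L := log (y + t) - log y with hL
  have hL_le : L ≤ t / y := by
    have := log_le_sub_one_of_pos (div_pos hyt hy0)
    rw [log_div hyt.ne' hy0.ne'] at this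
    rw [hL]; convert this using 1; field_simp; ring
  have le_hL : t / (y + t) ≤ L := by
    have := one_sub_inv_le_log_of_pos (div_pos hyt hy0)
    rw [log_div hyt.ne' hy0.ne'] at this
    rw [hL]; convert this using 1; field_simp; ring
  have key : (y + t - 1 / 2) * log (y + t) - (y - 1 / 2) * log y - t - t * log y
      = (y + t - 1 / 2) * L - t := by rw [hL]; ring
  rw [key, abs_le]
  constructor
  · have h1 : (y + t - 1 / 2) * (t / (y + t)) ≤ (y + t - 1 / 2) * L :=
      mul_le_mul_of_nonneg_left le_hL (by linarith)
    have h2 : (y + t - 1 / 2) * (t / (y + t)) - t = -(t / (2 * (y + t))) := by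
      field_simp; ring
    have h3 : t / (2 * (y + t)) ≤ 1 / (2 * y) := by
      rw [div_le_div_iff₀ (by positivity) (by positivity)]; nlinarith
    linarith
  · have h1 : (y + t - 1 / 2) * L ≤ (y + t - 1 / 2) * (t / y) :=
      mul_le_mul_of_nonneg_left hL_le (by linarith)
    have h2 : (y + t - 1 / 2) * (t / y) - t = t * (t - 1 / 2) / y := by
      field_simp; ring
    have h3 : t * (t - 1 / 2) / y ≤ 1 / (2 * y) := by
      rw [div_le_div_iff₀ hy0 (by positivity)]
      nlinarith [mul_nonneg (mul_nonneg ht0 (sub_nonneg.2 ht1)) hy0.le,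
        mul_nonneg (sub_nonneg.2 ht1) hy0.le]
    linarith

lemma abs_stirlingRemainder_nat_add_sub_le {n : ℕ} (hn : 2 ≤ n) {t : ℝ} (ht0 : 0 ≤ t)
    (ht1 : t ≤ 1) :
    |stirlingRemainder (n + t) - stirlingRemainder n| ≤ log n - log (n - 1) + 1 / (2 * n) := by
  have hn' : (1 / 2 : ℝ) ≤ n := by
    have : (2 : ℝ) ≤ n := by exact_mod_cast hn
    linarith
  calc |stirlingRemainder (n + t) - stirlingRemainder n|
      = |(log (Gamma (n + t)) - log (Gamma n) - t * log n)
          - ((n + t - 1 / 2) * log (n + t) - (n - 1 / 2) * log n - t - t * log n)| := by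
        rw [stirlingRemainder, stirlingRemainder]; ring_nf
    _ ≤ |log (Gamma (n + t)) - log (Gamma n) - t * log n|
          + |(n + t - 1 / 2) * log (n + t) - (n - 1 / 2) * log n - t - t * log n| :=
        abs_sub _ _
    _ ≤ log n - log (n - 1) + 1 / (2 * n) :=
        add_le_add (abs_log_Gamma_nat_add_sub_le hn ht0 ht1) (abs_stirling_add_sub_le hn' ht0 ht1)

lemma tendsto_stirlingRemainder : Tendsto stirlingRemainder atTop (𝓝 0) := by
  have hε : Tendsto (fun n : ℕ => log n - log (n - 1) + 1 / (2 * n)) atTop (𝓝 0) := by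
    rw [← tendsto_add_atTop_iff_nat 1]
    have h := tendsto_log_nat_add_one_sub_log.add
      ((tendsto_one_div_add_atTop_nhds_zero_nat).div_const 2)
    rw [zero_add, zero_div] at h
    refine h.congr fun n => ?_
    push_cast
    rw [add_sub_cancel_right, div_div, mul_comm (2 : ℝ)]
  have hfloor := tendsto_nat_floor_atTop (α := ℝ)
  have hdiff : Tendsto (fun x => stirlingRemainder x - stirlingRemainder ⌊x⌋₊) atTop (𝓝 0) := by
    refine squeeze_zero_norm' ?_ (hε.comp hfloor)
    filter_upwards [eventually_ge_atTop (2 : ℝ)] with x hx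
    have hx0 : 0 ≤ x := by linarith
    have := abs_stirlingRemainder_nat_add_sub_le (Nat.le_floor (by exact_mod_cast hx))
      (sub_nonneg.2 (Nat.floor_le hx0)) (by linarith [Nat.lt_floor_add_one x])
    rwa [add_sub_cancel] at this
  simpa using (tendsto_stirlingRemainder_natCast.comp hfloor).add hdiff

lemma isBigO_log_one_add_sub_add_sq :
    (fun h : ℝ => log (1 + h) - h + h ^ 2 / 2) =O[𝓝 0] (fun h => h ^ 3) := by
  refine IsBigO.of_bound 2 ?_
  filter_upwards [Metric.closedBall_mem_nhds (0 : ℝ) (by norm_num : (0 : ℝ) < 1 / 2)] with h hh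
  rw [Metric.mem_closedBall, dist_zero_right, norm_eq_abs] at hh
  have hlt : |-h| < 1 := by rw [abs_neg]; linarith
  have key := abs_log_sub_add_sum_range_le hlt 2
  norm_num [Finset.sum_range_succ] at key
  rw [norm_eq_abs, norm_eq_abs, abs_pow]
  calc |log (1 + h) - h + h ^ 2 / 2| = |-h + h ^ 2 / 2 + log (1 + h)| := by ring_nf
    _ ≤ |h| ^ 3 / (1 - |h|) := key
    _ ≤ 2 * |h| ^ 3 := by
        rw [div_le_iff₀ (by linarith)]
        nlinarith [pow_nonneg (abs_nonneg h) 3]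

lemma tendsto_sq_mul_log_one_add_div_sub (z : ℝ) :
    Tendsto (fun x : ℝ => x ^ 2 * log (1 + z / x) - z * x) atTop (𝓝 (-z ^ 2 / 2)) := by
  have hzx : Tendsto (fun x : ℝ => z / x) atTop (𝓝 0) := tendsto_const_nhds.div_atTop tendsto_id
  have hO : (fun x : ℝ => x ^ 2 * (log (1 + z / x) - z / x + (z / x) ^ 2 / 2))
      =O[atTop] (fun x => x ^ 2 * (z / x) ^ 3) :=
    (isBigO_refl _ _).mul (isBigO_log_one_add_sub_add_sq.comp_tendsto hzx)
  have h0 : Tendsto (fun x : ℝ => x ^ 2 * (z / x) ^ 3) atTop (𝓝 0) := by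
    have := hzx.const_mul (z ^ 2)
    rw [mul_zero] at this
    refine this.congr' ?_
    filter_upwards [eventually_ne_atTop 0] with x hx
    field_simp
  have := (hO.trans_tendsto h0).add_const (-z ^ 2 / 2)
  rw [zero_add] at this
  refine this.congr' ?_
  filter_upwards [eventually_ne_atTop 0] with x hx
  field_simp
  ring

lemma eventually_div_sqrt_add_pos {c : ℝ} (hc : 0 < c) (z : ℝ) :
    ∀ᶠ m : ℝ in atTop, 0 < z / √m + c := by
  have h := ((tendsto_const_nhds (x := z)).div_atTop tendsto_sqrt_atTop).add_const c
  rw [zero_add] at h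
  exact h.eventually (lt_mem_nhds hc)

lemma tendsto_mul_sub_one_mul_log_add_div_sqrt_sub {c : ℝ} (hc : 0 < c) (z : ℝ) :
    Tendsto (fun m : ℝ => (m * c - 1) * (log (z / √m + c) - log c) - √m * z) atTop
      (𝓝 (-z ^ 2 / (2 * c))) := by
  have hx : Tendsto (fun m : ℝ => √m * c) atTop atTop := tendsto_sqrt_atTop.atTop_mul_const hc
  have hlog : Tendsto (fun m : ℝ => log (1 + z / (√m * c))) atTop (𝓝 0) := by
    have h1 := ((tendsto_const_nhds (x := z)).div_atTop hx).const_add (1 : ℝ)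
    rw [add_zero] at h1
    have h := (continuousAt_log one_ne_zero).tendsto.comp h1
    rwa [log_one] at h
  have h := ((tendsto_sq_mul_log_one_add_div_sub z).comp hx).div_const c |>.sub hlog
  rw [sub_zero, div_div] at h
  refine h.congr' ?_
  filter_upwards [eventually_div_sqrt_add_pos hc z, eventually_gt_atTop 0] with m hm hm0
  have hs : 0 < √m := sqrt_pos.2 hm0
  have h1 : 1 + z / (√m * c) = (z / √m + c) / c := by field_simp; ring
  simp only [Function.comp_apply]
  rw [h1, log_div hm.ne' hc.ne', mul_pow, sq_sqrt hm0.le]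
  field_simp
  ring

-- The paper's `f_m(z)`, the density of `√m (Y - v)` for `Y ∼ Beta(m v, m (1 - v))`.
noncomputable def scaledBetaDensity (v m z : ℝ) : ℝ :=
  Gamma m / (Gamma (m * v) * Gamma (m * (1 - v))) * m ^ (-(1 : ℝ) / 2) *
    (z / √m + v) ^ (m * v - 1) * (1 - z / √m - v) ^ (m * (1 - v) - 1)


lemma scaledBetaDensity_pos {v m z : ℝ} (hv0 : 0 < v) (hv1 : v < 1) (hm : 0 < m)
    (hp : 0 < z / √m + v) (hq : 0 < 1 - z / √m - v) : 0 < scaledBetaDensity v m z := by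
  have hw : 0 < 1 - v := sub_pos.2 hv1
  unfold scaledBetaDensity
  have := Gamma_pos_of_pos hm
  have := Gamma_pos_of_pos (mul_pos hm hv0)
  have := Gamma_pos_of_pos (mul_pos hm hw)
  positivity

lemma log_scaledBetaDensity {v m z : ℝ} (hv0 : 0 < v) (hv1 : v < 1) (hm : 0 < m)
    (hp : 0 < z / √m + v) (hq : 0 < 1 - z / √m - v) :
    log (scaledBetaDensity v m z) = stirlingRemainder m - stirlingRemainder (m * v)
      - stirlingRemainder (m * (1 - v)) - log (2 * π * v * (1 - v)) / 2
      + ((m * v - 1) * (log (z / √m + v) - log v)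
        + (m * (1 - v) - 1) * (log (1 - z / √m - v) - log (1 - v))) := by
  have hw : 0 < 1 - v := sub_pos.2 hv1
  have hΓ := Gamma_pos_of_pos hm
  have hΓv := Gamma_pos_of_pos (mul_pos hm hv0)
  have hΓw := Gamma_pos_of_pos (mul_pos hm hw)
  rw [scaledBetaDensity, log_mul (by positivity) (by positivity), log_mul (by positivity)
    (by positivity), log_mul (by positivity) (by positivity), log_div hΓ.ne' (by positivity),
    log_mul hΓv.ne' hΓw.ne', log_rpow hm, log_rpow hp, log_rpow hq]
  simp only [stirlingRemainder]
  rw [log_mul hm.ne' hv0.ne', log_mul hm.ne' hw.ne', log_mul (by positivity) hw.ne',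
    log_mul (by positivity) hv0.ne']
  ring

lemma eventually_scaledBetaDensity_pos_and_log_eq {v : ℝ} (hv0 : 0 < v) (hv1 : v < 1) (z : ℝ) :
    ∀ᶠ m : ℝ in atTop, 0 < scaledBetaDensity v m z ∧
      log (scaledBetaDensity v m z) = stirlingRemainder m - stirlingRemainder (m * v)
        - stirlingRemainder (m * (1 - v)) - log (2 * π * v * (1 - v)) / 2
        + (((m * v - 1) * (log (z / √m + v) - log v) - √m * z)
          + ((m * (1 - v) - 1) * (log (-z / √m + (1 - v)) - log (1 - v)) - √m * -z)) := by
  filter_upwards [eventually_gt_atTop 0, eventually_div_sqrt_add_pos hv0 z,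
    eventually_div_sqrt_add_pos (sub_pos.2 hv1) (-z)] with m hm hp hq
  have e : -z / √m + (1 - v) = 1 - z / √m - v := by ring
  rw [e] at hq ⊢
  refine ⟨scaledBetaDensity_pos hv0 hv1 hm hp hq, ?_⟩
  rw [log_scaledBetaDensity hv0 hv1 hm hp hq]
  ring

lemma tendsto_log_scaledBetaDensity {v : ℝ} (hv0 : 0 < v) (hv1 : v < 1) (z : ℝ) :
    Tendsto (fun m => log (scaledBetaDensity v m z)) atTop
      (𝓝 (-(log (2 * π * v * (1 - v)) / 2) + -z ^ 2 / (2 * v * (1 - v)))) := by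
  have hw : 0 < 1 - v := sub_pos.2 hv1
  have hR {c : ℝ} (hc : 0 < c) : Tendsto (fun m => stirlingRemainder (m * c)) atTop (𝓝 0) :=
    tendsto_stirlingRemainder.comp (tendsto_id.atTop_mul_const hc)
  have h := (((tendsto_stirlingRemainder.sub (hR hv0)).sub (hR hw)).sub_const
    (log (2 * π * v * (1 - v)) / 2)).add ((tendsto_mul_sub_one_mul_log_add_div_sqrt_sub hv0 z).add
      (tendsto_mul_sub_one_mul_log_add_div_sqrt_sub hw (-z)))
  have hlim : 0 - 0 - 0 - log (2 * π * v * (1 - v)) / 2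
        + (-z ^ 2 / (2 * v) + -(-z) ^ 2 / (2 * (1 - v)))
      = -(log (2 * π * v * (1 - v)) / 2) + -z ^ 2 / (2 * v * (1 - v)) := by
    field_simp
    ring
  rw [hlim] at h
  exact h.congr' ((eventually_scaledBetaDensity_pos_and_log_eq hv0 hv1 z).mono fun m hm => hm.2.symm)

lemma one_div_sqrt_mul_exp {x : ℝ} (hx : 0 < x) (y : ℝ) :
    1 / √x * exp y = exp (-(log x / 2) + y) := by
  rw [exp_add, exp_neg, div_eq_mul_one_div (log x), ← rpow_def_of_pos hx, ← sqrt_eq_rpow, one_div]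

theorem stmt_17 (v : ℝ) (hv0 : 0 < v) (hv1 : v < 1) (z : ℝ) :
    Tendsto (fun m : ℝ =>
        Real.Gamma m / (Real.Gamma (m * v) * Real.Gamma (m * (1 - v))) *
          m ^ (-(1 : ℝ) / 2) *
          (z / Real.sqrt m + v) ^ (m * v - 1) *
          (1 - z / Real.sqrt m - v) ^ (m * (1 - v) - 1))
      atTop
      (nhds ((1 / Real.sqrt (2 * Real.pi * v * (1 - v))) *
        Real.exp (-z ^ 2 / (2 * v * (1 - v))))) := by
  show Tendsto (fun m => scaledBetaDensity v m z) atTop _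
  rw [one_div_sqrt_mul_exp (by have := sub_pos.2 hv1; positivity)]
  exact ((continuous_exp.tendsto _).comp (tendsto_log_scaledBetaDensity hv0 hv1 z)).congr'
    ((eventually_scaledBetaDensity_pos_and_log_eq hv0 hv1 z).mono fun m hm => exp_log hm.1)
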